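/- Let Y be a complete metric space with doubling measure ν, uniformly perfect at x_0, let 0 < θ < 1, 1 ≤ p < ∞, and 0 < R_0 ≤ diam(Y)/4 finite. If the lower bound cap_{θ,p}(B(x_0,r), B(x_0,R)) ≥ c ν(B(x_0,r))/r^{θp} holds for all 0 < 2r ≤ R ≤ R_0, then θp ∈ Q̲_0, i.e. there is a constant C with ν(B(x_0,r))/ν(B(x_0,R)) ≤ C (r/R)^{θp} for all 0 < r < R ≤ 1. -/

import Mathlib

/-!
Test the condenser capacity of `(B(x₀, r), B(x₀, R))` with the cutoff
`max 0 (min 1 (3 - 4 d(z, x₀) / R))`; its support is compact because a complete space carrying a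
doubling measure is proper. The cutoff is `4 / R`-Lipschitz and bounded by `1`, so splitting the
Besov integrals into dyadic annuli around each point and summing the resulting geometric series
with the doubling property gives `cap_{θ,p}(B_r, B_R) ≲ ν(B_R) / R^{θp}`. Together with the
assumed lower bound this yields `ν(B_r) ≲ (r / R)^{θp} ν(B_R)` for `2r ≤ R ≤ R₀`, and
monotonicity of `r ↦ ν(B_r)` covers the remaining scales `r < R ≤ 1`.
-/

open MeasureTheory Metric Set ENNReal

open Classical in

/-- Pointwise Besov energy `∫_Y |u(x)-u(y)|^p / d(x,y)^{θp} · dν(y)/ν(B(x,d(x,y)))`. -/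
noncomputable def besovPointEnergy {Y : Type*} [MetricSpace Y] [MeasurableSpace Y]
    (ν : Measure Y) (θ p : ℝ) (u : Y → ℝ) (x : Y) : ℝ≥0∞ :=
  ∫⁻ y, (if x = y then 0 else
    ENNReal.ofReal (|u x - u y| ^ p) /
      (ENNReal.ofReal (dist x y ^ (θ * p)) * ν (ball x (dist x y)))) ∂ν

/-- The Besov seminorm to the power `p`:
`[u]_{θ,p}^p = ∫_Y ∫_Y |u(x)-u(y)|^p / d(x,y)^{θp} · dν(y) dν(x)/ν(B(x,d(x,y)))`. -/
noncomputable def besovEnergy {Y : Type*} [MetricSpace Y] [MeasurableSpace Y]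
    (ν : Measure Y) (θ p : ℝ) (u : Y → ℝ) : ℝ≥0∞ :=
  ∫⁻ x, besovPointEnergy ν θ p u x ∂ν

/-- `u` is admissible for the Besov norm-capacity of `E`:
`0 ≤ u ≤ 1` everywhere and `u = 1` in a neighbourhood of `E`. -/
def normAdmissible {Y : Type*} [MetricSpace Y] (E : Set Y) (u : Y → ℝ) : Prop :=
  (∀ z, 0 ≤ u z ∧ u z ≤ 1) ∧ ∃ G : Set Y, IsOpen G ∧ E ⊆ G ∧ ∀ z ∈ G, u z = 1

/-- The Besov norm-capacity `C_{θ,p}(E) = inf (‖u‖_{L^p}^p + [u]_{θ,p}^p)` over admissible `u`. -/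
noncomputable def besovNormCap {Y : Type*} [MetricSpace Y] [MeasurableSpace Y]
    (ν : Measure Y) (θ p : ℝ) (E : Set Y) : ℝ≥0∞ :=
  ⨅ (u : Y → ℝ) (_ : normAdmissible E u),
    (∫⁻ x, ENNReal.ofReal (|u x| ^ p) ∂ν) + besovEnergy ν θ p u

/-- `u` is admissible for the Besov condenser capacity of `(E, Ω)`:
`0 ≤ u ≤ 1` everywhere, `u = 1` in a neighbourhood of `E`, and `supp u ⋐ Ω`. -/
def condAdmissible {Y : Type*} [MetricSpace Y] (E Ω : Set Y) (u : Y → ℝ) : Prop :=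
  (∀ z, 0 ≤ u z ∧ u z ≤ 1) ∧ (∃ G : Set Y, IsOpen G ∧ E ⊆ G ∧ ∀ z ∈ G, u z = 1) ∧
    IsCompact (tsupport u) ∧ tsupport u ⊆ Ω

/-- The Besov condenser capacity `cap_{θ,p}(E,Ω) = inf [u]_{θ,p}^p` over admissible `u`. -/
noncomputable def besovCondCap {Y : Type*} [MetricSpace Y] [MeasurableSpace Y]
    (ν : Measure Y) (θ p : ℝ) (E Ω : Set Y) : ℝ≥0∞ :=
  ⨅ (u : Y → ℝ) (_ : condAdmissible E Ω u), besovEnergy ν θ p u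

/-- `ν` is doubling with constant `C`. -/
def IsDoublingWith {Y : Type*} [MetricSpace Y] [MeasurableSpace Y]
    (ν : Measure Y) (C : ℝ) : Prop :=
  ∀ (x : Y) (r : ℝ), 0 < r → ν (ball x (2 * r)) ≤ ENNReal.ofReal C * ν (ball x r)

/-- `ν` is positive and finite on balls. -/
def BallsPosFinite {Y : Type*} [MetricSpace Y] [MeasurableSpace Y] (ν : Measure Y) : Prop :=
  ∀ (x : Y) (r : ℝ), 0 < r → 0 < ν (ball x r) ∧ ν (ball x r) < ∞

/-- `X` is uniformly perfect at `x` with constant `κ`. -/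
def UnifPerfectAt {Y : Type*} [MetricSpace Y] (x : Y) (κ : ℝ) : Prop :=
  ∀ r : ℝ, 0 < r → ball x (κ * r) ≠ univ → (ball x (κ * r) \ ball x r).Nonempty

open scoped NNReal

theorem ENNReal.ofReal_div_ofReal_mul {a b : ℝ} (hb : 0 < b) (c : ℝ≥0∞) :
    ENNReal.ofReal a / (ENNReal.ofReal b * c) = ENNReal.ofReal (a / b) / c := by
  rw [ENNReal.ofReal_div_of_pos hb, div_eq_mul_inv, div_eq_mul_inv, div_eq_mul_inv,
    ENNReal.mul_inv (Or.inl (ENNReal.ofReal_pos.2 hb).ne') (Or.inl ENNReal.ofReal_ne_top),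
    mul_assoc]

theorem ENNReal.div_le_mul_div_of_le_mul {X a b K : ℝ≥0∞} (ha0 : a ≠ 0) (hat : a ≠ ⊤)
    (hb0 : b ≠ 0) (hbt : b ≠ ⊤) (h : b ≤ K * a) : X / a ≤ K * X / b := by
  rw [ENNReal.le_div_iff_mul_le (Or.inl hb0) (Or.inl hbt)]
  calc X / a * b ≤ X / a * (K * a) := by gcongr
    _ = K * X := by rw [mul_comm K, ← mul_assoc, ENNReal.div_mul_cancel ha0 hat, mul_comm]

theorem totallyBounded_of_packingNumber_ne_top {X : Type*} [PseudoMetricSpace X] {s : Set X}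
    (h : ∀ ε : ℝ≥0, ε ≠ 0 → packingNumber ε s ≠ ⊤) : TotallyBounded s := by
  refine Metric.totallyBounded_iff.2 fun ε hε => ?_
  set δ : ℝ≥0 := (ε / 2).toNNReal
  have hδε : (δ : ℝ) < ε := by rw [Real.coe_toNNReal _ (by positivity)]; linarith
  have hδ : packingNumber δ s ≠ ⊤ := h δ (by simpa [δ])
  refine ⟨maximalSeparatedSet δ s, ?_, ?_⟩
  · rw [← Set.encard_ne_top_iff, encard_maximalSeparatedSet hδ]
    exact hδ
  · refine (isCover_iff_subset_iUnion_closedBall.1 (isCover_maximalSeparatedSet hδ)).trans ?_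
    exact iUnion₂_mono fun y _ => closedBall_subset_ball hδε

namespace IsDoublingWith

variable {Y : Type*} [MetricSpace Y] [MeasurableSpace Y] {ν : Measure Y} {Cν : ℝ}

theorem measure_ball_two_pow_mul_le (hdoub : IsDoublingWith ν Cν) (x : Y) {t : ℝ} (ht : 0 < t) :
    ∀ n : ℕ, ν (ball x (2 ^ n * t)) ≤ ENNReal.ofReal Cν ^ n * ν (ball x t)
  | 0 => by simp
  | n + 1 => calc
      ν (ball x (2 ^ (n + 1) * t)) = ν (ball x (2 * (2 ^ n * t))) := by rw [pow_succ', mul_assoc]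
      _ ≤ ENNReal.ofReal Cν * ν (ball x (2 ^ n * t)) := hdoub x _ (by positivity)
      _ ≤ ENNReal.ofReal Cν * (ENNReal.ofReal Cν ^ n * ν (ball x t)) := by
        gcongr; exact measure_ball_two_pow_mul_le hdoub x ht n
      _ = ENNReal.ofReal Cν ^ (n + 1) * ν (ball x t) := by ring

theorem measure_ball_le_of_dist_add_le (hdoub : IsDoublingWith ν Cν) {x z : Y} {s t : ℝ}
    (ht : 0 < t) {n : ℕ} (h : dist x z + s ≤ 2 ^ n * t) :
    ν (ball x s) ≤ ENNReal.ofReal Cν ^ n * ν (ball z t) :=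
  (measure_mono (ball_subset_ball' (by linarith))).trans
    (hdoub.measure_ball_two_pow_mul_le z ht n)

variable [OpensMeasurableSpace Y]

/-- Disjoint balls of radius `ε / 2` around the points of `C` each fill a fixed proportion of a
ball containing all of them. -/
theorem encard_le_of_isSeparated (hdoub : IsDoublingWith ν Cν) (hballs : BallsPosFinite ν)
    {x : Y} {r : ℝ} {ε : ℝ≥0} (hε : ε ≠ 0) {n : ℕ} (hn : 2 * |r| + ε ≤ 2 ^ n * (ε / 2))
    {C : Set Y} (hCx : C ⊆ closedBall x r) (hC : IsSeparated (ε : ℝ≥0∞) C) :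
    (C.encard : ℝ≥0∞) ≤ ENNReal.ofReal Cν ^ n := by
  have hε0 : (0 : ℝ) < ε := NNReal.coe_pos.2 (pos_iff_ne_zero.2 hε)
  set ρ := |r| + ε
  have hρ : 0 < ρ := by positivity
  have hdisj : Pairwise (Function.onFun Disjoint fun c : C => ball (c : Y) (ε / 2)) := by
    intro c c' hcc'
    have hsep : (ε : ℝ≥0∞) < edist (c : Y) c' := hC c.2 c'.2 (Subtype.coe_ne_coe.2 hcc')
    rw [edist_nndist, ENNReal.coe_lt_coe, ← NNReal.coe_lt_coe, coe_nndist] at hsep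
    exact ball_disjoint_ball (by linarith)
  have hsub : (⋃ c : C, ball (c : Y) (ε / 2)) ⊆ ball x ρ := by
    refine iUnion_subset fun c => ball_subset_ball' ?_
    have := mem_closedBall.1 (hCx c.2)
    linarith [le_abs_self r]
  have hball : ∀ c ∈ C, ν (ball x ρ) ≤ ENNReal.ofReal Cν ^ n * ν (ball c (ε / 2)) := by
    intro c hc
    refine hdoub.measure_ball_le_of_dist_add_le (by positivity) ?_
    have := mem_closedBall'.1 (hCx hc)
    linarith [le_abs_self r]
  have hmass : (C.encard : ℝ≥0∞) * ν (ball x ρ) ≤ ENNReal.ofReal Cν ^ n * ν (ball x ρ) := calc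
    (C.encard : ℝ≥0∞) * ν (ball x ρ) = ∑' _ : C, ν (ball x ρ) := (ENNReal.tsum_set_const _ _).symm
    _ ≤ ∑' c : C, ENNReal.ofReal Cν ^ n * ν (ball (c : Y) (ε / 2)) :=
      ENNReal.tsum_le_tsum fun c => hball c c.2
    _ = ENNReal.ofReal Cν ^ n * ∑' c : C, ν (ball (c : Y) (ε / 2)) := ENNReal.tsum_mul_left
    _ ≤ ENNReal.ofReal Cν ^ n * ν (ball x ρ) := by
      gcongr
      exact (tsum_meas_le_meas_iUnion_of_disjoint ν (fun _ => measurableSet_ball) hdisj).trans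
        (measure_mono hsub)
  exact (ENNReal.mul_le_mul_iff_left (hballs x ρ hρ).1.ne' (hballs x ρ hρ).2.ne).1 hmass

theorem packingNumber_closedBall_ne_top (hdoub : IsDoublingWith ν Cν) (hballs : BallsPosFinite ν)
    (x : Y) (r : ℝ) {ε : ℝ≥0} (hε : ε ≠ 0) : packingNumber ε (closedBall x r) ≠ ⊤ := by
  have hε0 : (0 : ℝ) < ε := NNReal.coe_pos.2 (pos_iff_ne_zero.2 hε)
  obtain ⟨n, hn⟩ := pow_unbounded_of_one_lt ((2 * |r| + ε) / (ε / 2)) one_lt_two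
  rw [div_lt_iff₀ (by positivity)] at hn
  have hpack : (packingNumber ε (closedBall x r) : ℝ≥0∞) ≤ ENNReal.ofReal Cν ^ n := by
    simp only [packingNumber, ENat.toENNReal_iSup]
    exact iSup₂_le fun C hCx => iSup_le
      (hdoub.encard_le_of_isSeparated hballs hε hn.le hCx)
  intro htop
  rw [htop] at hpack
  simp at hpack

theorem properSpace [CompleteSpace Y] (hdoub : IsDoublingWith ν Cν) (hballs : BallsPosFinite ν) :
    ProperSpace Y :=
  ⟨fun x r => (totallyBounded_of_packingNumber_ne_top fun _ hε =>
    hdoub.packingNumber_closedBall_ne_top hballs x r hε).isCompact_of_isClosed isClosed_closedBall⟩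

end IsDoublingWith

section Cutoff

variable {Y : Type*} [MetricSpace Y]

noncomputable def ballCutoff (x₀ : Y) (R : ℝ) (z : Y) : ℝ :=
  max 0 (min 1 (3 - 4 * dist z x₀ / R))

variable {x₀ : Y} {R : ℝ}

theorem ballCutoff_nonneg (z : Y) : 0 ≤ ballCutoff x₀ R z := le_max_left _ _

theorem ballCutoff_le_one (z : Y) : ballCutoff x₀ R z ≤ 1 :=
  max_le zero_le_one (min_le_left _ _)

theorem abs_ballCutoff_sub_le_one (a b : Y) : |ballCutoff x₀ R a - ballCutoff x₀ R b| ≤ 1 :=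
  abs_sub_le_of_nonneg_of_le (ballCutoff_nonneg a) (ballCutoff_le_one a) (ballCutoff_nonneg b)
    (ballCutoff_le_one b)

theorem ballCutoff_eq_one (hR : 0 < R) {z : Y} (hz : dist z x₀ < R / 2) :
    ballCutoff x₀ R z = 1 := by
  have : 4 * dist z x₀ / R ≤ 2 := by rw [div_le_iff₀ hR]; linarith
  rw [ballCutoff, min_eq_left (by linarith), max_eq_right zero_le_one]

theorem ballCutoff_eq_zero (hR : 0 < R) {z : Y} (hz : 3 * R / 4 ≤ dist z x₀) :
    ballCutoff x₀ R z = 0 := by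
  have : 3 ≤ 4 * dist z x₀ / R := by rw [le_div_iff₀ hR]; linarith
  rw [ballCutoff, max_eq_left (min_le_of_right_le (by linarith))]

theorem abs_ballCutoff_sub_le (hR : 0 < R) (a b : Y) :
    |ballCutoff x₀ R a - ballCutoff x₀ R b| ≤ 4 / R * dist a b := calc
  |ballCutoff x₀ R a - ballCutoff x₀ R b|
      ≤ |min 1 (3 - 4 * dist a x₀ / R) - min 1 (3 - 4 * dist b x₀ / R)| := by
    simpa only [ballCutoff, max_comm (0 : ℝ)] using abs_max_sub_max_le_abs _ _ 0
  _ ≤ |(3 - 4 * dist a x₀ / R) - (3 - 4 * dist b x₀ / R)| := by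
    simpa using abs_min_sub_min_le_max (1 : ℝ) (3 - 4 * dist a x₀ / R) 1 (3 - 4 * dist b x₀ / R)
  _ = 4 / R * |dist b x₀ - dist a x₀| := by
    rw [← abs_of_pos (show 0 < 4 / R by positivity), ← abs_mul]
    ring_nf
  _ ≤ 4 / R * dist a b := by
    gcongr
    simpa only [dist_comm b a] using abs_dist_sub_le b a x₀

theorem ballCutoff_condAdmissible [ProperSpace Y] {r : ℝ} (hr : 0 < r) (hrR : 2 * r ≤ R) :
    condAdmissible (ball x₀ r) (ball x₀ R) (ballCutoff x₀ R) := by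
  have hR : 0 < R := by linarith
  have hsupp : tsupport (ballCutoff x₀ R) ⊆ closedBall x₀ (3 * R / 4) :=
    closure_minimal (fun z hz => mem_closedBall.2 <| not_lt.1 fun h =>
      hz (ballCutoff_eq_zero hR h.le)) isClosed_closedBall
  refine ⟨fun z => ⟨ballCutoff_nonneg z, ballCutoff_le_one z⟩,
    ⟨ball x₀ (R / 2), isOpen_ball, ball_subset_ball (by linarith),
      fun z hz => ballCutoff_eq_one hR (mem_ball.1 hz)⟩,
    (isCompact_closedBall x₀ _).of_isClosed_subset (isClosed_tsupport _) hsupp,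
    hsupp.trans (closedBall_subset_ball (by linarith))⟩

end Cutoff

theorem exists_two_pow_mul_le_lt {t d : ℝ} (ht : 0 < t) (htd : t ≤ d) :
    ∃ k : ℕ, 2 ^ k * t ≤ d ∧ d < 2 ^ (k + 1) * t := by
  obtain ⟨k, h1, h2⟩ := exists_nat_pow_near ((one_le_div ht).2 htd) one_lt_two
  exact ⟨k, (le_div_iff₀ ht).1 h1, (div_lt_iff₀ ht).1 h2⟩

theorem exists_div_two_pow_le_lt {t d : ℝ} (hd : 0 < d) (hdt : d < t) :
    ∃ k : ℕ, t / 2 ^ (k + 1) ≤ d ∧ d < t / 2 ^ k := by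
  have hex : ∃ n : ℕ, t / 2 ^ (n + 1) ≤ d := by
    obtain ⟨n, hn⟩ := pow_unbounded_of_one_lt (t / d) one_lt_two
    refine ⟨n, (div_le_iff₀ (by positivity)).2 ?_⟩
    rw [div_lt_iff₀ hd] at hn
    have h2 : (2 : ℝ) ^ n ≤ 2 ^ (n + 1) := pow_le_pow_right₀ one_le_two (Nat.le_add_right n 1)
    linarith [mul_le_mul_of_nonneg_left h2 hd.le]
  refine ⟨Nat.find hex, Nat.find_spec hex, ?_⟩
  rcases h : Nat.find hex with _ | k
  · simpa using hdt
  · exact not_le.1 (Nat.find_min hex (h ▸ k.lt_succ_self))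

theorem one_sub_inv_two_rpow_pos {s : ℝ} (hs : 0 < s) : 0 < 1 - ((2 : ℝ) ^ s)⁻¹ :=
  sub_pos.2 (inv_lt_one_of_one_lt₀ (Real.one_lt_rpow one_lt_two hs))

theorem tsum_ofReal_mul_geometric {a q : ℝ} (ha : 0 ≤ a) (hq0 : 0 ≤ q) (hq1 : q < 1) :
    ∑' k : ℕ, ENNReal.ofReal (a * q ^ k) = ENNReal.ofReal (a * (1 - q)⁻¹) := by
  simp_rw [ENNReal.ofReal_mul ha, ENNReal.ofReal_pow hq0]
  rw [ENNReal.tsum_mul_left, ENNReal.tsum_geometric, ENNReal.ofReal_inv_of_pos (by linarith),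
    ENNReal.ofReal_sub _ hq0, ENNReal.ofReal_one]

/-- `Cν ∑ₖ 2^{-ks}`: the constant picked up when integrating `d ^ (±s) / ν (ball x d)` over the
dyadic annuli around `x`. -/
noncomputable def dyadicConst (Cν s : ℝ) : ℝ := Cν * (1 - (2 ^ s)⁻¹)⁻¹

theorem dyadicConst_nonneg {Cν s : ℝ} (hC : 0 ≤ Cν) (hs : 0 < s) : 0 ≤ dyadicConst Cν s :=
  mul_nonneg hC (inv_nonneg.2 (one_sub_inv_two_rpow_pos hs).le)

theorem tsum_ofReal_mul_inv_two_rpow_pow {Cν s a : ℝ} (hC : 0 ≤ Cν) (hs : 0 < s) (ha : 0 ≤ a) :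
    ∑' k : ℕ, ENNReal.ofReal (Cν * a * ((2 ^ s)⁻¹) ^ k) =
      ENNReal.ofReal (dyadicConst Cν s * a) := by
  rw [tsum_ofReal_mul_geometric (by positivity) (by positivity)
    (inv_lt_one_of_one_lt₀ (Real.one_lt_rpow one_lt_two hs)), dyadicConst]
  ring_nf

namespace IsDoublingWith

variable {Y : Type*} [MetricSpace Y] [MeasurableSpace Y] [OpensMeasurableSpace Y]
  {ν : Measure Y} {Cν : ℝ}

theorem setLIntegral_ball_diff_ball_le (hdoub : IsDoublingWith ν Cν) (hballs : BallsPosFinite ν)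
    {x : Y} {a b : ℝ} (ha : 0 < a) (hb : b ≤ 2 * a) {f : Y → ℝ≥0∞} {M : ℝ≥0∞}
    (hf : ∀ y ∈ ball x b \ ball x a, f y ≤ M / ν (ball x a)) :
    ∫⁻ y in ball x b \ ball x a, f y ∂ν ≤ ENNReal.ofReal Cν * M := calc
  ∫⁻ y in ball x b \ ball x a, f y ∂ν ≤ ∫⁻ _ in ball x b \ ball x a, M / ν (ball x a) ∂ν :=
    setLIntegral_mono' (measurableSet_ball.diff measurableSet_ball) hf
  _ = M / ν (ball x a) * ν (ball x b \ ball x a) := setLIntegral_const _ _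
  _ ≤ M / ν (ball x a) * (ENNReal.ofReal Cν * ν (ball x a)) := by
    gcongr
    exact (measure_mono (sdiff_subset.trans (ball_subset_ball hb))).trans (hdoub x a ha)
  _ = ENNReal.ofReal Cν * M := by
    rw [mul_left_comm, ENNReal.div_mul_cancel (hballs x a ha).1.ne' (hballs x a ha).2.ne]

theorem setLIntegral_compl_ball_le (hdoub : IsDoublingWith ν Cν) (hballs : BallsPosFinite ν)
    (hC : 0 ≤ Cν) {s : ℝ} (hs : 0 < s) {x : Y} {t : ℝ} (ht : 0 < t) {f : Y → ℝ≥0∞} {M : ℝ≥0∞}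
    (hf : ∀ y ∉ ball x t,
      f y ≤ M * ENNReal.ofReal ((dist y x ^ s)⁻¹) / ν (ball x (dist y x))) :
    ∫⁻ y in (ball x t)ᶜ, f y ∂ν ≤ ENNReal.ofReal (dyadicConst Cν s * (t ^ s)⁻¹) * M := by
  have hcover : (ball x t)ᶜ ⊆ ⋃ k : ℕ, ball x (2 ^ (k + 1) * t) \ ball x (2 ^ k * t) := by
    intro y hy
    obtain ⟨k, hk⟩ := exists_two_pow_mul_le_lt ht (not_lt.1 hy)
    exact mem_iUnion.2 ⟨k, mem_ball.2 hk.2, fun h => (mem_ball.1 h).not_ge hk.1⟩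
  calc ∫⁻ y in (ball x t)ᶜ, f y ∂ν
      ≤ ∑' k : ℕ, ∫⁻ y in ball x (2 ^ (k + 1) * t) \ ball x (2 ^ k * t), f y ∂ν :=
        (lintegral_mono_set hcover).trans (lintegral_iUnion_le _ _)
    _ ≤ ∑' k : ℕ, ENNReal.ofReal Cν * (M * ENNReal.ofReal (((2 ^ k * t) ^ s)⁻¹)) := by
        refine ENNReal.tsum_le_tsum fun k => hdoub.setLIntegral_ball_diff_ball_le hballs
          (by positivity) (by rw [pow_succ]; linarith) fun y hy => ?_
        have hy' : 2 ^ k * t ≤ dist y x := not_lt.1 hy.2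
        refine (hf y fun h => (mem_ball.1 h).not_ge ?_).trans ?_
        · exact le_trans (le_mul_of_one_le_left ht.le (one_le_pow₀ one_le_two)) hy'
        · gcongr
    _ = ∑' k : ℕ, ENNReal.ofReal (Cν * (t ^ s)⁻¹ * ((2 ^ s)⁻¹) ^ k) * M := by
        congr 1 with k
        rw [Real.mul_rpow (by positivity) ht.le, ← Real.rpow_pow_comm zero_le_two, mul_inv,
          ← inv_pow, mul_assoc, ENNReal.ofReal_mul hC, mul_comm (_ ^ k)]
        ring
    _ = ENNReal.ofReal (dyadicConst Cν s * (t ^ s)⁻¹) * M := by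
        rw [ENNReal.tsum_mul_right, tsum_ofReal_mul_inv_two_rpow_pow hC hs (by positivity)]

theorem setLIntegral_ball_le (hdoub : IsDoublingWith ν Cν) (hballs : BallsPosFinite ν)
    (hC : 0 ≤ Cν) {s : ℝ} (hs : 0 < s) {x : Y} {t : ℝ} (ht : 0 < t) {f : Y → ℝ≥0∞} {M : ℝ≥0∞}
    (hfx : f x = 0)
    (hf : ∀ y ∈ ball x t, y ≠ x →
      f y ≤ M * ENNReal.ofReal (dist y x ^ s) / ν (ball x (dist y x))) :
    ∫⁻ y in ball x t, f y ∂ν ≤ ENNReal.ofReal (dyadicConst Cν s * t ^ s) * M := by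
  have hcover : ball x t ⊆ {x} ∪ ⋃ k : ℕ, ball x (t / 2 ^ k) \ ball x (t / 2 ^ (k + 1)) := by
    intro y hy
    rcases eq_or_ne y x with rfl | hyx
    · exact Or.inl rfl
    obtain ⟨k, hk⟩ := exists_div_two_pow_le_lt (dist_pos.2 hyx) (mem_ball.1 hy)
    exact Or.inr (mem_iUnion.2 ⟨k, mem_ball.2 hk.2, fun h => (mem_ball.1 h).not_ge hk.1⟩)
  calc ∫⁻ y in ball x t, f y ∂ν
      ≤ ∫⁻ y in {x}, f y ∂ν +
          ∑' k : ℕ, ∫⁻ y in ball x (t / 2 ^ k) \ ball x (t / 2 ^ (k + 1)), f y ∂ν :=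
        (lintegral_mono_set hcover).trans
          ((lintegral_union_le _ _ _).trans (add_le_add le_rfl (lintegral_iUnion_le _ _)))
    _ = ∑' k : ℕ, ∫⁻ y in ball x (t / 2 ^ k) \ ball x (t / 2 ^ (k + 1)), f y ∂ν := by
        rw [lintegral_singleton, hfx, zero_mul, zero_add]
    _ ≤ ∑' k : ℕ, ENNReal.ofReal Cν * (M * ENNReal.ofReal ((t / 2 ^ k) ^ s)) := by
        refine ENNReal.tsum_le_tsum fun k => hdoub.setLIntegral_ball_diff_ball_le hballs
          (by positivity) (by rw [pow_succ]; field_simp; rfl) fun y hy => ?_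
        have hy' : t / 2 ^ (k + 1) ≤ dist y x := not_lt.1 hy.2
        have hyx : y ≠ x := by
          rintro rfl
          rw [dist_self] at hy'
          exact (not_le.2 (by positivity)) hy'
        refine (hf y ?_ hyx).trans ?_
        · exact ball_subset_ball (div_le_self ht.le (one_le_pow₀ one_le_two)) hy.1
        · gcongr
          exact (mem_ball.1 hy.1).le
    _ = ∑' k : ℕ, ENNReal.ofReal (Cν * t ^ s * ((2 ^ s)⁻¹) ^ k) * M := by
        congr 1 with k
        rw [Real.div_rpow ht.le (by positivity), ← Real.rpow_pow_comm zero_le_two, div_eq_mul_inv,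
          ← inv_pow, mul_assoc, ENNReal.ofReal_mul hC]
        ring
    _ = ENNReal.ofReal (dyadicConst Cν s * t ^ s) * M := by
        rw [ENNReal.tsum_mul_right, tsum_ofReal_mul_inv_two_rpow_pow hC hs (by positivity)]

end IsDoublingWith

section BesovIntegrand

variable {Y : Type*} [MetricSpace Y] [MeasurableSpace Y] {ν : Measure Y} {θ p : ℝ} {u : Y → ℝ}

open Classical in
noncomputable def besovIntegrand (ν : Measure Y) (θ p : ℝ) (u : Y → ℝ) (x y : Y) : ℝ≥0∞ :=
  if x = y then 0 else
    ENNReal.ofReal (|u x - u y| ^ p) / (ENNReal.ofReal (dist x y ^ (θ * p)) * ν (ball x (dist x y)))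

theorem besovPointEnergy_eq_lintegral (x : Y) :
    besovPointEnergy ν θ p u x = ∫⁻ y, besovIntegrand ν θ p u x y ∂ν := rfl

@[simp]
theorem besovIntegrand_self (x : Y) : besovIntegrand ν θ p u x x = 0 := by
  simp [besovIntegrand]

theorem besovIntegrand_eq_zero (hp : p ≠ 0) {x y : Y} (h : u x = u y) :
    besovIntegrand ν θ p u x y = 0 := by
  simp [besovIntegrand, h, Real.zero_rpow hp]

theorem besovIntegrand_le {x y : Y} (hyx : y ≠ x) {g : ℝ}
    (h : |u x - u y| ^ p ≤ g * dist y x ^ (θ * p)) (hd : 0 < dist y x ^ (θ * p)) :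
    besovIntegrand ν θ p u x y ≤ ENNReal.ofReal g / ν (ball x (dist y x)) := by
  rw [besovIntegrand, if_neg (Ne.symm hyx), dist_comm x y, ENNReal.ofReal_div_ofReal_mul hd]
  gcongr
  rwa [div_le_iff₀ hd]

/-- Far from the support of `u`, only the points of `ball x₀ R` contribute, all at distance at
least `dist x x₀ / 2` from `x`. -/
theorem besovIntegrand_le_indicator (hθ0 : 0 < θ) (hp : 0 < p) (hbdd : ∀ a b, |u a - u b| ≤ 1)
    {x₀ : Y} {R : ℝ} (hR : 0 < R) (hsupp : ∀ z ∉ ball x₀ R, u z = 0) {x : Y}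
    (hx : x ∉ ball x₀ (2 * R)) (y : Y) :
    besovIntegrand ν θ p u x y ≤ (ball x₀ R).indicator (fun _ =>
      ENNReal.ofReal (((dist x x₀ / 2) ^ (θ * p))⁻¹) / ν (ball x (dist x x₀ / 2))) y := by
  have hD : 2 * R ≤ dist x x₀ := not_lt.1 hx
  have hD0 : 0 < dist x x₀ := by linarith
  by_cases hy : y ∈ ball x₀ R
  · have hyx : dist x x₀ / 2 ≤ dist y x := by
      linarith [mem_ball.1 hy, dist_triangle_left x x₀ y]
    have hd : 0 < dist y x ^ (θ * p) := by
      have : 0 < dist y x := by linarith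
      positivity
    have hyx' : y ≠ x := by
      rintro rfl
      exact hx (ball_subset_ball (by linarith) hy)
    rw [indicator_of_mem hy]
    refine (besovIntegrand_le hyx' ?_ hd).trans
      (ENNReal.div_le_div le_rfl (measure_mono (ball_subset_ball hyx)))
    rw [inv_mul_eq_div, le_div_iff₀ (by positivity)]
    calc |u x - u y| ^ p * (dist x x₀ / 2) ^ (θ * p) ≤ 1 * dist y x ^ (θ * p) := by
          gcongr
          exact Real.rpow_le_one (abs_nonneg _) (hbdd x y) hp.le
      _ = dist y x ^ (θ * p) := one_mul _
  · rw [indicator_of_notMem hy, nonpos_iff_eq_zero]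
    exact besovIntegrand_eq_zero hp.ne' ((hsupp x fun h => hx (ball_subset_ball
      (by linarith) h)).trans (hsupp y hy).symm)

end BesovIntegrand

section BesovEnergy

variable {Y : Type*} [MetricSpace Y] [MeasurableSpace Y] [OpensMeasurableSpace Y]
  {ν : Measure Y} {Cν θ p : ℝ} {u : Y → ℝ}

theorem besovPointEnergy_le_of_abs_sub_le (hdoub : IsDoublingWith ν Cν)
    (hballs : BallsPosFinite ν) (hC : 0 ≤ Cν) (hθ0 : 0 < θ) (hθ1 : θ < 1) (hp : 0 < p)
    {A R : ℝ} (hA : 0 ≤ A) (hR : 0 < R) (hlip : ∀ a b, |u a - u b| ≤ A / R * dist a b)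
    (hbdd : ∀ a b, |u a - u b| ≤ 1) (x : Y) :
    besovPointEnergy ν θ p u x ≤ ENNReal.ofReal
      ((dyadicConst Cν (p - θ * p) * A ^ p + dyadicConst Cν (θ * p)) * (R ^ (θ * p))⁻¹) := by
  have hσ : 0 < θ * p := by positivity
  have hτ : 0 < p - θ * p := by nlinarith
  have hdσ : ∀ y ≠ x, 0 < dist y x ^ (θ * p) := fun y hyx => by
    have := dist_pos.2 hyx
    positivity
  rw [besovPointEnergy_eq_lintegral, ← lintegral_add_compl _ (measurableSet_ball (x := x) (ε := R))]
  have hnear := hdoub.setLIntegral_ball_le hballs hC hτ hR (M := ENNReal.ofReal ((A / R) ^ p))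
    (f := besovIntegrand ν θ p u x) (besovIntegrand_self x)
    fun y _ hyx => by
      rw [← ENNReal.ofReal_mul (by positivity)]
      refine besovIntegrand_le hyx ?_ (hdσ y hyx)
      have hd := dist_nonneg (x := y) (y := x)
      calc |u x - u y| ^ p ≤ (A / R * dist y x) ^ p := by
            gcongr
            rw [dist_comm]
            exact hlip x y
        _ = (A / R) ^ p * dist y x ^ (p - θ * p) * dist y x ^ (θ * p) := by
            rw [Real.mul_rpow (by positivity) hd, mul_assoc, ← Real.rpow_add' hd (by linarith)]
            ring_nf
  have htail := hdoub.setLIntegral_compl_ball_le hballs hC hσ hR (M := 1)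
    (f := besovIntegrand ν θ p u x)
    fun y hy => by
      have hyx : y ≠ x := by rintro rfl; exact hy (mem_ball_self hR)
      rw [one_mul]
      refine besovIntegrand_le hyx ?_ (hdσ y hyx)
      rw [inv_mul_cancel₀ (hdσ y hyx).ne']
      exact Real.rpow_le_one (abs_nonneg _) (hbdd x y) hp.le
  refine (add_le_add hnear htail).trans_eq ?_
  have hdτ := dyadicConst_nonneg hC hτ
  have hdσ' := dyadicConst_nonneg hC hσ
  rw [mul_one, ← ENNReal.ofReal_mul (by positivity), ← ENNReal.ofReal_add (by positivity)
    (by positivity), Real.div_rpow hA hR.le, Real.rpow_sub hR]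
  congr 1
  field_simp

theorem besovPointEnergy_le_of_notMem_ball (hdoub : IsDoublingWith ν Cν)
    (hballs : BallsPosFinite ν) (hC : 0 ≤ Cν) (hθ0 : 0 < θ) (hp : 0 < p)
    (hbdd : ∀ a b, |u a - u b| ≤ 1) {x₀ : Y} {R : ℝ} (hR : 0 < R)
    (hsupp : ∀ z ∉ ball x₀ R, u z = 0) {x : Y} (hx : x ∉ ball x₀ (2 * R)) :
    besovPointEnergy ν θ p u x ≤ ENNReal.ofReal (Cν ^ 2 * 2 ^ (θ * p)) * ν (ball x₀ R) *
      ENNReal.ofReal ((dist x x₀ ^ (θ * p))⁻¹) / ν (ball x₀ (dist x x₀)) := by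
  set D := dist x x₀
  have hD : 2 * R ≤ D := not_lt.1 hx
  have hD0 : 0 < D := by linarith
  have hdoub2 : ν (ball x₀ D) ≤ ENNReal.ofReal (Cν ^ 2) * ν (ball x (D / 2)) := by
    rw [ENNReal.ofReal_pow hC]
    exact hdoub.measure_ball_le_of_dist_add_le (by positivity) (by rw [dist_comm]; linarith)
  calc besovPointEnergy ν θ p u x
      ≤ ∫⁻ y, (ball x₀ R).indicator
          (fun _ => ENNReal.ofReal (((D / 2) ^ (θ * p))⁻¹) / ν (ball x (D / 2))) y ∂ν :=
        lintegral_mono fun y => besovIntegrand_le_indicator hθ0 hp hbdd hR hsupp hx y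
    _ = ENNReal.ofReal (((D / 2) ^ (θ * p))⁻¹) / ν (ball x (D / 2)) * ν (ball x₀ R) := by
        rw [lintegral_indicator_const measurableSet_ball]
    _ ≤ ENNReal.ofReal (Cν ^ 2) * ENNReal.ofReal (((D / 2) ^ (θ * p))⁻¹) / ν (ball x₀ D) *
          ν (ball x₀ R) := by
        gcongr ?_ * _
        exact ENNReal.div_le_mul_div_of_le_mul (hballs x _ (by positivity)).1.ne'
          (hballs x _ (by positivity)).2.ne (hballs x₀ D hD0).1.ne' (hballs x₀ D hD0).2.ne hdoub2
    _ = _ := by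
        rw [Real.div_rpow hD0.le zero_le_two, inv_div, div_eq_mul_inv _ (D ^ (θ * p)),
          ENNReal.ofReal_mul (by positivity), ← mul_assoc, ← ENNReal.ofReal_mul (by positivity)]
        simp only [div_eq_mul_inv]
        ring

theorem besovEnergy_le_of_abs_sub_le (hdoub : IsDoublingWith ν Cν)
    (hballs : BallsPosFinite ν) (hC : 0 ≤ Cν) (hθ0 : 0 < θ) (hθ1 : θ < 1) (hp : 0 < p)
    {A R : ℝ} (hA : 0 ≤ A) (hR : 0 < R) (hlip : ∀ a b, |u a - u b| ≤ A / R * dist a b)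
    (hbdd : ∀ a b, |u a - u b| ≤ 1) {x₀ : Y} (hsupp : ∀ z ∉ ball x₀ R, u z = 0) :
    besovEnergy ν θ p u ≤ ENNReal.ofReal
      ((Cν * (dyadicConst Cν (p - θ * p) * A ^ p + dyadicConst Cν (θ * p)) +
        Cν ^ 2 * dyadicConst Cν (θ * p)) * (R ^ (θ * p))⁻¹) * ν (ball x₀ R) := by
  have hσ : 0 < θ * p := by positivity
  have hdτ := dyadicConst_nonneg hC (show 0 < p - θ * p by nlinarith)
  have hdσ := dyadicConst_nonneg hC hσ
  set P := (dyadicConst Cν (p - θ * p) * A ^ p + dyadicConst Cν (θ * p)) * (R ^ (θ * p))⁻¹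
    with hPdef
  have hP : 0 ≤ P := by positivity
  rw [besovEnergy, ← lintegral_add_compl _ (measurableSet_ball (x := x₀) (ε := 2 * R))]
  have hnear : ∫⁻ x in ball x₀ (2 * R), besovPointEnergy ν θ p u x ∂ν ≤
      ENNReal.ofReal P * (ENNReal.ofReal Cν * ν (ball x₀ R)) := calc
    _ ≤ ∫⁻ _ in ball x₀ (2 * R), ENNReal.ofReal P ∂ν := setLIntegral_mono' measurableSet_ball
          fun x _ => besovPointEnergy_le_of_abs_sub_le hdoub hballs hC hθ0 hθ1 hp hA hR hlip hbdd x
    _ = ENNReal.ofReal P * ν (ball x₀ (2 * R)) := setLIntegral_const _ _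
    _ ≤ _ := by gcongr; exact hdoub x₀ R hR
  have hfar := hdoub.setLIntegral_compl_ball_le hballs hC hσ (by positivity : 0 < 2 * R)
    fun x hx => besovPointEnergy_le_of_notMem_ball hdoub hballs hC hθ0 hp hbdd hR hsupp hx
  refine (add_le_add hnear hfar).trans_eq ?_
  rw [← mul_assoc, ← mul_assoc, ← ENNReal.ofReal_mul hP, ← ENNReal.ofReal_mul (by positivity),
    ← add_mul, ← ENNReal.ofReal_add (by positivity) (by positivity),
    Real.mul_rpow zero_le_two hR.le]
  congr 2
  rw [hPdef]
  field_simp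

theorem besovCondCap_ball_le [CompleteSpace Y] (hdoub : IsDoublingWith ν Cν)
    (hballs : BallsPosFinite ν) (hC : 0 ≤ Cν) (hθ0 : 0 < θ) (hθ1 : θ < 1) (hp : 0 < p)
    (x₀ : Y) {r R : ℝ} (hr : 0 < r) (hrR : 2 * r ≤ R) :
    besovCondCap ν θ p (ball x₀ r) (ball x₀ R) ≤ ENNReal.ofReal
      ((Cν * (dyadicConst Cν (p - θ * p) * 4 ^ p + dyadicConst Cν (θ * p)) +
        Cν ^ 2 * dyadicConst Cν (θ * p)) * (R ^ (θ * p))⁻¹) * ν (ball x₀ R) := by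
  have := hdoub.properSpace hballs
  have hR : 0 < R := by linarith
  exact (iInf₂_le _ (ballCutoff_condAdmissible hr hrR)).trans
    (besovEnergy_le_of_abs_sub_le hdoub hballs hC hθ0 hθ1 hp zero_le_four hR
      (abs_ballCutoff_sub_le hR) abs_ballCutoff_sub_le_one
      fun z hz => ballCutoff_eq_zero hR (by linarith [not_lt.1 fun h => hz (mem_ball.2 h)]))

end BesovEnergy

theorem le_ofReal_mul_of_ofReal_mul_div_le {a b : ℝ≥0∞} {c K r R σ : ℝ} (hc : 0 < c)
    (hr : 0 < r) (hR : 0 < R)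
    (h : ENNReal.ofReal c * (a / ENNReal.ofReal (r ^ σ)) ≤ ENNReal.ofReal (K * (R ^ σ)⁻¹) * b) :
    a ≤ ENNReal.ofReal (K / c * (r / R) ^ σ) * b := by
  have hrσ : 0 < r ^ σ := by positivity
  have hc0 : ENNReal.ofReal c ≠ 0 := (ENNReal.ofReal_pos.2 hc).ne'
  have hrσ0 : ENNReal.ofReal (r ^ σ) ≠ 0 := (ENNReal.ofReal_pos.2 hrσ).ne'
  calc a = ENNReal.ofReal (r ^ σ / c) * (ENNReal.ofReal c * (a / ENNReal.ofReal (r ^ σ))) := by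
        rw [ENNReal.ofReal_div_of_pos hc, ← mul_assoc,
          ENNReal.div_mul_cancel hc0 ENNReal.ofReal_ne_top,
          ENNReal.mul_div_cancel hrσ0 ENNReal.ofReal_ne_top]
    _ ≤ ENNReal.ofReal (r ^ σ / c) * (ENNReal.ofReal (K * (R ^ σ)⁻¹) * b) := by gcongr
    _ = ENNReal.ofReal (K / c * (r / R) ^ σ) * b := by
        rw [← mul_assoc, ← ENNReal.ofReal_mul (by positivity), Real.div_rpow hr.le hR.le]
        ring_nf

/-- `σ ∈ Q̲₀` for the volume function `V`, tested on scales up to `ρ`. -/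
def RpowRatioBound (V : ℝ → ℝ≥0∞) (σ C ρ : ℝ) : Prop :=
  ∀ r R, 0 < r → r < R → R ≤ ρ → V r ≤ ENNReal.ofReal (C * (r / R) ^ σ) * V R

namespace Monotone

variable {V : ℝ → ℝ≥0∞} {σ : ℝ}

theorem le_ofReal_mul_of_one_le (hV : Monotone V) {r R a : ℝ} (hrR : r ≤ R) (ha : 1 ≤ a) :
    V r ≤ ENNReal.ofReal a * V R :=
  (hV hrR).trans (le_mul_of_one_le_left' (ENNReal.one_le_ofReal.2 ha))

theorem rpowRatioBound_of_two_mul_le (hV : Monotone V) (hσ : 0 < σ) {K ρ : ℝ}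
    (h : ∀ r R, 0 < r → 2 * r ≤ R → R ≤ ρ → V r ≤ ENNReal.ofReal (K * (r / R) ^ σ) * V R) :
    RpowRatioBound V σ (max K (2 ^ σ)) ρ := by
  intro r R hr hrR hRρ
  have hR : 0 < R := hr.trans hrR
  rcases le_or_gt (2 * r) R with h2r | h2r
  · exact (h r R hr h2r hRρ).trans (by gcongr; exact le_max_left _ _)
  · refine hV.le_ofReal_mul_of_one_le hrR.le ?_
    calc (1 : ℝ) = 2 ^ σ * (1 / 2) ^ σ := by
          rw [← Real.mul_rpow zero_le_two (by norm_num)]; norm_num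
      _ ≤ max K (2 ^ σ) * (r / R) ^ σ := by
          have : 1 / 2 ≤ r / R := by rw [div_le_div_iff₀ two_pos hR]; linarith
          exact mul_le_mul (le_max_right _ _) (by gcongr) (by positivity) (by positivity)

theorem exists_rpowRatioBound_one (hV : Monotone V) (hσ : 0 < σ) {C ρ : ℝ} (hρ : 0 < ρ)
    (h : RpowRatioBound V σ C ρ) (hC : 1 ≤ C) : ∃ C' > 0, RpowRatioBound V σ C' 1 := by
  set ρ₁ := min ρ 1
  have hρ₁ : 0 < ρ₁ := lt_min hρ one_pos
  have hρ₁σ : 0 < ρ₁ ^ σ := by positivity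
  have hρ₁σ1 : ρ₁ ^ σ ≤ 1 := Real.rpow_le_one hρ₁.le (min_le_right _ _) hσ.le
  refine ⟨C * (ρ₁ ^ σ)⁻¹, by have := one_pos.trans_le hC; positivity, ?_⟩
  intro r R hr hrR hR1
  have hR : 0 < R := hr.trans hrR
  rcases le_or_gt R ρ₁ with hRρ | hρR
  · refine (h r R hr hrR (hRρ.trans (min_le_left _ _))).trans ?_
    gcongr
    exact le_mul_of_one_le_right (by linarith) (one_le_inv₀ hρ₁σ |>.2 hρ₁σ1)
  rcases lt_or_ge r ρ₁ with hrρ | hρr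
  · calc V r ≤ ENNReal.ofReal (C * (r / ρ₁) ^ σ) * V ρ₁ := h r ρ₁ hr hrρ (min_le_left _ _)
      _ ≤ ENNReal.ofReal (C * (ρ₁ ^ σ)⁻¹ * (r / R) ^ σ) * V R := by
          gcongr ENNReal.ofReal ?_ * ?_
          · rw [mul_assoc, Real.div_rpow hr.le hρ₁.le, div_eq_inv_mul]
            gcongr
            exact le_div_self hr.le hR hR1
          · exact hV hρR.le
  · refine hV.le_ofReal_mul_of_one_le hrR.le ?_
    calc (1 : ℝ) = (ρ₁ ^ σ)⁻¹ * ρ₁ ^ σ := (inv_mul_cancel₀ hρ₁σ.ne').symm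
      _ ≤ 1 * ((ρ₁ ^ σ)⁻¹ * (r / R) ^ σ) := by
          rw [one_mul]
          gcongr
          exact hρr.trans (le_div_self hr.le hR hR1)
      _ ≤ C * (ρ₁ ^ σ)⁻¹ * (r / R) ^ σ := by
          rw [mul_assoc]
          gcongr

end Monotone

theorem stmt19_general {Y : Type*} [MetricSpace Y] [MeasurableSpace Y] [BorelSpace Y] [CompleteSpace Y]
    (ν : Measure Y) (θ p Cν : ℝ) (hθ0 : 0 < θ) (hθ1 : θ < 1) (hp : 1 ≤ p)
    (hC : 1 < Cν) (hdoub : IsDoublingWith ν Cν) (hballs : BallsPosFinite ν)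
    (x₀ : Y)
    (R₀ : ℝ) (hR₀ : 0 < R₀)
    (c : ℝ) (hc : 0 < c)
    (hlow : ∀ r R : ℝ, 0 < r → 2 * r ≤ R → R ≤ R₀ →
        ENNReal.ofReal c * (ν (ball x₀ r) / ENNReal.ofReal (r ^ (θ * p))) ≤
          besovCondCap ν θ p (ball x₀ r) (ball x₀ R)) :
    ∃ C : ℝ, 0 < C ∧ ∀ r R : ℝ, 0 < r → r < R → R ≤ 1 →
      ν (ball x₀ r) ≤ ENNReal.ofReal (C * (r / R) ^ (θ * p)) * ν (ball x₀ R) := by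
  have hσ : 0 < θ * p := by positivity
  have hV : Monotone fun r => ν (ball x₀ r) := fun _ _ h => measure_mono (ball_subset_ball h)
  have hratio := hV.rpowRatioBound_of_two_mul_le hσ fun r R hr hrR hRR₀ =>
    le_ofReal_mul_of_ofReal_mul_div_le hc hr (by linarith) <| (hlow r R hr hrR hRR₀).trans <|
      besovCondCap_ball_le hdoub hballs (by linarith) hθ0 hθ1 (by linarith) x₀ hr hrR
  exact hV.exists_rpowRatioBound_one hσ hR₀ hratio
    (le_max_of_le_right (Real.one_le_rpow one_le_two hσ.le))

theorem stmt19 {Y : Type*} [MetricSpace Y] [MeasurableSpace Y] [BorelSpace Y] [CompleteSpace Y]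
    (ν : Measure Y) (θ p Cν κ : ℝ) (hθ0 : 0 < θ) (hθ1 : θ < 1) (hp : 1 ≤ p)
    (hC : 1 < Cν) (hdoub : IsDoublingWith ν Cν) (hballs : BallsPosFinite ν)
    (x₀ : Y) (hκ : 1 < κ) (hup : UnifPerfectAt x₀ κ)
    (R₀ : ℝ) (hR₀ : 0 < R₀)
    (hdiam : ENNReal.ofReal (4 * R₀) ≤ EMetric.diam (univ : Set Y))
    (c : ℝ) (hc : 0 < c)
    (hlow : ∀ r R : ℝ, 0 < r → 2 * r ≤ R → R ≤ R₀ →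
        ENNReal.ofReal c * (ν (ball x₀ r) / ENNReal.ofReal (r ^ (θ * p))) ≤
          besovCondCap ν θ p (ball x₀ r) (ball x₀ R)) :
    ∃ C : ℝ, 0 < C ∧ ∀ r R : ℝ, 0 < r → r < R → R ≤ 1 →
      ν (ball x₀ r) ≤ ENNReal.ofReal (C * (r / R) ^ (θ * p)) * ν (ball x₀ R) :=
  stmt19_general ν θ p Cν hθ0 hθ1 hp hC hdoub hballs x₀ R₀ hR₀ c hc hlow
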